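/- arXiv:1011.1622 — 2 statements merged into one kernel-verified Lean document; each statement's English description precedes it below -/
import Mathlib

section
/- Let n ≥ 2 and δ ≥ (n−1)/2, and let φ^δ : ℝⁿ → ℂ be the Bochner-Riesz kernel, i.e. the Fourier transform of ξ ↦ (1−|ξ|²)_+^δ. Then there exists a constant C > 0 such that for all x ∈ ℝⁿ, |φ^δ(x)| ≤ C·(1+|x|)^{−((n+1)/2+δ)}. -/
/-!
`φ^δ` is radial, so it suffices to evaluate it at `r e₀`. Integrating out the last `n - 1`
coordinates and rescaling gives `φ^δ(r e₀) = K · 𝓕[(1 - t²)₊^μ](r)` with `μ = δ + (n - 1)/2`,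
and `μ + 1 = (n + 1)/2 + δ`. The one-dimensional transform is `∫_{-1}^{1} e^{-2πirz} (1 - z²)^μ dz`;
the integrand is holomorphic off `(-∞, -1] ∪ [1, ∞)` and decays like `e^{-2πrs}` at height `-s`,
so the segment can be pushed down to the rays `±1 - i[0, ∞)`. On them `|1 - z²| = s |s ∓ 2i|`,
and `∫₀^∞ e^{-2πrs} s^μ (s + 2)^μ ds = O(r^{-(μ+1)})`.
-/

open MeasureTheory Metric ENNReal

noncomputable section

/-- `ℝⁿ` as a Euclidean space. -/
abbrev Rn (n : ℕ) := EuclideanSpace ℝ (Fin n)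

/-- A weight on `ℝⁿ`: a locally integrable function which is positive almost everywhere. -/
def IsWeight {n : ℕ} (w : Rn n → ℝ) : Prop :=
  LocallyIntegrable w volume ∧ ∀ᵐ x : Rn n ∂volume, 0 < w x

/-- The weighted measure `w(E) = ∫_E w(x) dx` of a set. -/
def wMeasure {n : ℕ} (w : Rn n → ℝ) (s : Set (Rn n)) : ℝ≥0∞ :=
  ∫⁻ x in s, ENNReal.ofReal (w x)

/-- The Muckenhoupt class `A_p`, `1 < p < ∞`. -/
def IsAp {n : ℕ} (p : ℝ) (w : Rn n → ℝ) : Prop :=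
  IsWeight w ∧ ∃ C : ℝ, ∀ (x₀ : Rn n) (r : ℝ), 0 < r →
    ((volume (ball x₀ r)).toReal⁻¹ * ∫ x in ball x₀ r, w x) *
      ((volume (ball x₀ r)).toReal⁻¹ * ∫ x in ball x₀ r, (w x) ^ (-(1 / (p - 1)))) ^ (p - 1) ≤ C

/-- The Muckenhoupt class `A_1`. -/
def IsA1 {n : ℕ} (w : Rn n → ℝ) : Prop :=
  IsWeight w ∧ ∃ C : ℝ, ∀ (x₀ : Rn n) (r : ℝ), 0 < r →
    (volume (ball x₀ r)).toReal⁻¹ * ∫ x in ball x₀ r, w x ≤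
      C * essInf w (volume.restrict (ball x₀ r))

/-- The reverse Hölder class `RH_r`, `r > 1`. -/
def IsRH {n : ℕ} (r : ℝ) (w : Rn n → ℝ) : Prop :=
  IsWeight w ∧ ∃ C : ℝ, ∀ (x₀ : Rn n) (ρ : ℝ), 0 < ρ →
    ((volume (ball x₀ ρ)).toReal⁻¹ * ∫ x in ball x₀ ρ, (w x) ^ r) ^ (1 / r) ≤
      C * ((volume (ball x₀ ρ)).toReal⁻¹ * ∫ x in ball x₀ ρ, w x)

/-- The weighted Morrey norm `‖f‖_{L^{p,κ}(w)}` (valued in `ℝ≥0∞`). -/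
def morreyNorm {n : ℕ} (p κ : ℝ) (w : Rn n → ℝ) (f : Rn n → ℝ) : ℝ≥0∞ :=
  ⨆ (x₀ : Rn n) (r : ℝ) (_ : 0 < r),
    ((∫⁻ x in ball x₀ r, ENNReal.ofReal (|f x| ^ p * w x)) /
      (wMeasure w (ball x₀ r)) ^ κ) ^ (1 / p)

/-- The average `b_B` of `b` over the ball `B(x₀, r)`. -/
def ballAvg {n : ℕ} (b : Rn n → ℝ) (x₀ : Rn n) (r : ℝ) : ℝ :=
  (volume (ball x₀ r)).toReal⁻¹ * ∫ x in ball x₀ r, b x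

/-- The BMO norm `‖b‖_*` (valued in `ℝ≥0∞`). -/
def bmoNorm {n : ℕ} (b : Rn n → ℝ) : ℝ≥0∞ :=
  ⨆ (x₀ : Rn n) (r : ℝ) (_ : 0 < r),
    (volume (ball x₀ r))⁻¹ * ∫⁻ x in ball x₀ r, ENNReal.ofReal |b x - ballAvg b x₀ r|

/-- `b ∈ BMO(ℝⁿ)`. -/
def IsBMO {n : ℕ} (b : Rn n → ℝ) : Prop :=
  LocallyIntegrable b volume ∧ bmoNorm b < ⊤

/-- The Bochner–Riesz kernel `φ^δ`, the Fourier transform of `ξ ↦ (1 - |ξ|²)₊^δ`. -/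
def brKernel (n : ℕ) (δ : ℝ) : Rn n → ℂ :=
  VectorFourier.fourierIntegral Real.fourierChar volume (innerₗ (Rn n)) (fun ξ : Rn n => ((((1 - ‖ξ‖ ^ 2) ⊔ 0) ^ δ : ℝ) : ℂ))

/-- The Bochner–Riesz operator `T^δ_R f(x) = ∫ Rⁿ φ^δ(R(x - y)) f(y) dy`. -/
def brOp {n : ℕ} (δ R : ℝ) (f : Rn n → ℝ) (x : Rn n) : ℂ :=
  ∫ y : Rn n, (R : ℂ) ^ n * brKernel n δ (R • (x - y)) * (f y : ℂ)

/-- The maximal Bochner–Riesz operator `T^δ_* f(x) = sup_{R > 0} |T^δ_R f(x)|`. -/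
def brMax {n : ℕ} (δ : ℝ) (f : Rn n → ℝ) (x : Rn n) : ℝ :=
  ⨆ (R : ℝ) (_ : 0 < R), ‖brOp δ R f x‖

/-- The commutator `[b, T^δ_R] f(x) = b(x) T^δ_R f(x) - T^δ_R (b f)(x)`. -/
def brComm {n : ℕ} (δ R : ℝ) (b f : Rn n → ℝ) (x : Rn n) : ℂ :=
  (b x : ℂ) * brOp δ R f x - brOp δ R (fun y => b y * f y) x


open Complex Real Set Filter FourierTransform Topology

namespace BochnerRiesz

lemma integrableOn_rpow_mul_exp_neg_mul {ν c : ℝ} (hν : -1 < ν) (hc : 0 < c) :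
    IntegrableOn (fun s : ℝ => s ^ ν * Real.exp (-(c * s))) (Ioi 0) := by
  refine Integrable.of_integral_ne_zero ?_
  have h := integral_rpow_mul_exp_neg_mul_Ioi (a := ν + 1) (by linarith) hc
  rw [add_sub_cancel_right] at h
  rw [h]
  have := Real.Gamma_pos_of_pos (by linarith : 0 < ν + 1)
  positivity

lemma exists_le_mul_one_add_rpow_neg {f : ℝ → ℝ} {a L A B : ℝ} (ha : 0 ≤ a) (hL : 0 < L)
    (hsmall : ∀ x, 0 ≤ x → x ≤ L → f x ≤ A) (hlarge : ∀ x, L ≤ x → f x ≤ B * x ^ (-a)) :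
    ∃ C, 0 < C ∧ ∀ x, 0 ≤ x → f x ≤ C * (1 + x) ^ (-a) := by
  have h1L : 0 < 1 + L := by linarith
  refine ⟨|A| * (1 + L) ^ a + |B| * (L / (1 + L)) ^ (-a) + 1, by positivity, fun x hx => ?_⟩
  have h1x : 0 < 1 + x := by linarith
  have hneg : -a ≤ 0 := neg_nonpos.2 ha
  have hA : 0 ≤ |A| * ((1 + L) ^ a * (1 + x) ^ (-a)) := by positivity
  have hB : 0 ≤ |B| * ((L / (1 + L)) ^ (-a) * (1 + x) ^ (-a)) := by positivity
  suffices f x ≤ |A| * ((1 + L) ^ a * (1 + x) ^ (-a)) +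
      |B| * ((L / (1 + L)) ^ (-a) * (1 + x) ^ (-a)) by
    nlinarith [Real.rpow_pos_of_pos h1x (-a)]
  rcases le_total x L with hxL | hLx
  · have h : 1 ≤ (1 + L) ^ a * (1 + x) ^ (-a) := by
      calc (1 : ℝ) = (1 + L) ^ a * (1 + L) ^ (-a) := by
            rw [Real.rpow_neg h1L.le, mul_inv_cancel₀ (by positivity)]
        _ ≤ (1 + L) ^ a * (1 + x) ^ (-a) := mul_le_mul_of_nonneg_left
            (Real.rpow_le_rpow_of_nonpos h1x (by linarith) hneg) (by positivity)
    linarith [hsmall x hx hxL, le_abs_self A, le_mul_of_one_le_right (abs_nonneg A) h]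
  · have h : x ^ (-a) ≤ (L / (1 + L)) ^ (-a) * (1 + x) ^ (-a) := by
      rw [← Real.mul_rpow (by positivity) h1x.le]
      refine Real.rpow_le_rpow_of_nonpos (by positivity) ?_ hneg
      rw [div_mul_eq_mul_div, div_le_iff₀ h1L]
      nlinarith
    have hBx : B * x ^ (-a) ≤ |B| * x ^ (-a) :=
      mul_le_mul_of_nonneg_right (le_abs_self B) (Real.rpow_nonneg hx _)
    linarith [hlarge x hLx, mul_le_mul_of_nonneg_left h (abs_nonneg B)]

def profile (μ t : ℝ) : ℝ := ((1 - t ^ 2) ⊔ 0) ^ μ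

lemma profile_eq_zero {μ t : ℝ} (hμ : 0 < μ) (ht : t ∉ Ioo (-1) 1) : profile μ t = 0 := by
  have : 1 - t ^ 2 ≤ 0 := by
    rw [mem_Ioo, not_and_or, not_lt, not_lt] at ht
    rcases ht with h | h <;> nlinarith
  rw [profile, sup_eq_right.2 this, zero_rpow hμ.ne']

lemma continuous_profile {μ : ℝ} (hμ : 0 < μ) : Continuous (profile μ) :=
  ((continuous_const.sub (continuous_pow 2)).max continuous_const).rpow_const
    fun _ => Or.inr hμ.le

def contourIntegrand (μ r : ℝ) (z : ℂ) : ℂ := cexp (-(2 * π * r) * z * I) * (1 - z ^ 2) ^ (μ : ℂ)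

lemma norm_contourIntegrand (μ r : ℝ) (z : ℂ) :
    ‖contourIntegrand μ r z‖ = Real.exp (2 * π * r * z.im) * ‖1 - z ^ 2‖ ^ μ := by
  rw [contourIntegrand, norm_mul, Complex.norm_exp, Complex.norm_cpow_real]
  congr 2
  simp [Complex.mul_re]

lemma one_sub_sq_mem_slitPlane {z : ℂ} (h : z.im = 0 → |z.re| < 1) : 1 - z ^ 2 ∈ slitPlane := by
  rw [mem_slitPlane_iff]
  have hre : (1 - z ^ 2).re = 1 - (z.re ^ 2 - z.im ^ 2) := by simp [sq]
  have him : (1 - z ^ 2).im = -(2 * z.re * z.im) := by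
    simp only [sq, sub_im, one_im, mul_im]; ring
  by_cases him0 : z.im = 0
  · left
    have := abs_lt.1 (h him0)
    rw [hre]; nlinarith
  · by_cases hre0 : z.re = 0
    · left; rw [hre, hre0]; nlinarith [sq_nonneg z.im]
    · right; rw [him]; simp [hre0, him0]

lemma continuousAt_contourIntegrand {μ : ℝ} (hμ : 0 < μ) (r : ℝ) {z : ℂ}
    (h : z.im = 0 → |z.re| ≤ 1) : ContinuousAt (contourIntegrand μ r) z := by
  refine Continuous.continuousAt (by fun_prop) |>.mul ?_
  by_cases h0 : 1 - z ^ 2 = 0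
  · have hcpow : ContinuousAt (fun p : ℂ × ℂ => p.1 ^ p.2) (1 - z ^ 2, (μ : ℂ)) := by
      rw [h0]; exact continuousAt_cpow_zero_of_re_pos (by simpa using hμ)
    exact hcpow.comp (f := fun w : ℂ => (1 - w ^ 2, (μ : ℂ))) (by fun_prop)
  · refine (continuousAt_cpow_const (one_sub_sq_mem_slitPlane fun him => ?_)).comp
      (f := fun w : ℂ => 1 - w ^ 2) (by fun_prop)
    refine (h him).lt_of_ne fun habs => h0 ?_
    have hsq : z.re ^ 2 = 1 := by rw [← sq_abs, habs, one_pow]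
    rw [← re_add_im z, him, Complex.ofReal_zero, zero_mul, add_zero, ← Complex.ofReal_pow, hsq]
    simp

lemma fourier_profile_eq_intervalIntegral {μ : ℝ} (hμ : 0 < μ) (r : ℝ) :
    𝓕 (fun t : ℝ => (profile μ t : ℂ)) r = ∫ t in (-1 : ℝ)..1, contourIntegrand μ r t := by
  rw [Real.fourier_real_eq_integral_exp_smul, intervalIntegral.integral_of_le (by norm_num),
    ← setIntegral_eq_integral_of_forall_compl_eq_zero fun t ht => by
      rw [profile_eq_zero hμ fun h => ht (Ioo_subset_Ioc_self h), Complex.ofReal_zero, smul_zero]]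
  refine setIntegral_congr_fun measurableSet_Ioc fun t ⟨ht₁, ht₂⟩ => ?_
  have ht : 0 ≤ 1 - t ^ 2 := by nlinarith
  rw [contourIntegrand, profile, sup_eq_left.2 ht, Complex.ofReal_cpow ht, smul_eq_mul]
  push_cast
  ring_nf

lemma intervalIntegral_contourIntegrand_eq_sides {μ : ℝ} (hμ : 0 < μ) (r : ℝ) {T : ℝ} (hT : 0 < T) :
    ∫ t in (-1 : ℝ)..1, contourIntegrand μ r t =
      (∫ x in (-1 : ℝ)..1, contourIntegrand μ r (x - T * I)) +
        I • (∫ s in (0 : ℝ)..T, contourIntegrand μ r (1 - s * I)) -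
        I • ∫ s in (0 : ℝ)..T, contourIntegrand μ r (-1 - s * I) := by
  have hrect := integral_boundary_rect_eq_zero_of_continuousOn_of_differentiableOn
    (contourIntegrand μ r) ⟨-1, -T⟩ 1 ?_ ?_
  · have hside : ∀ ε : ℝ, ∫ s in (0 : ℝ)..T, contourIntegrand μ r (ε - s * I) =
        ∫ y in (-T)..0, contourIntegrand μ r (ε + y * I) := fun ε => by
      rw [← neg_zero, ← intervalIntegral.integral_comp_neg, neg_zero]
      simp only [Complex.ofReal_neg, neg_mul, sub_eq_add_neg]
    simp only [Complex.one_re, Complex.one_im, Complex.ofReal_zero, zero_mul, add_zero,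
      Complex.ofReal_neg, neg_mul, ← sub_eq_add_neg] at hrect
    have h₁ := hside 1
    have h₂ := hside (-1)
    push_cast at h₁ h₂ hrect
    rw [h₁, h₂]
    linear_combination -hrect
  · intro z ⟨hre, _⟩
    rw [uIcc_of_le (by norm_num)] at hre
    exact (continuousAt_contourIntegrand hμ r fun _ => abs_le.2 hre).continuousWithinAt
  · intro z ⟨_, him⟩
    simp only [min_eq_left (by linarith : -T ≤ (0 : ℝ)), max_eq_right (by linarith : -T ≤ (0 : ℝ)),
      Complex.one_im] at him
    refine DifferentiableAt.differentiableWithinAt ?_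
    have hslit := one_sub_sq_mem_slitPlane fun h => absurd h him.2.ne
    unfold contourIntegrand
    fun_prop (disch := exact hslit)

lemma norm_contourIntegrand_bottom_le {μ r x T : ℝ} (hμ : 0 ≤ μ) (hx : |x| ≤ 1) (hT : 2 ≤ T) :
    ‖contourIntegrand μ r (x - T * I)‖ ≤ 4 ^ μ * (T ^ (2 * μ) * Real.exp (-(2 * π * r) * T)) := by
  have hz : ‖(x : ℂ) - T * I‖ ≤ 1 + T := by
    refine (norm_sub_le _ _).trans ?_
    rw [Complex.norm_real, norm_mul, Complex.norm_I, mul_one, Complex.norm_real, Real.norm_eq_abs,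
      Real.norm_eq_abs, abs_of_nonneg (by linarith : 0 ≤ T)]
    linarith
  have hbase : ‖1 - ((x : ℂ) - T * I) ^ 2‖ ≤ 4 * T ^ 2 := by
    refine (norm_sub_le _ _).trans ?_
    rw [norm_one, norm_pow]
    nlinarith [norm_nonneg ((x : ℂ) - T * I)]
  have hpow : (4 * T ^ 2) ^ μ = 4 ^ μ * T ^ (2 * μ) := by
    rw [Real.mul_rpow (by norm_num) (by positivity), ← Real.rpow_natCast,
      ← Real.rpow_mul (by linarith)]
    norm_num
  have him : ((x : ℂ) - T * I).im = -T := by simp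
  rw [norm_contourIntegrand, him, show 2 * π * r * -T = -(2 * π * r) * T by ring, mul_comm,
    ← mul_assoc, ← hpow]
  gcongr

lemma tendsto_integral_contourIntegrand_bottom {μ : ℝ} (hμ : 0 ≤ μ) {r : ℝ} (hr : 0 < r) :
    Tendsto (fun T : ℝ => ∫ x in (-1 : ℝ)..1, contourIntegrand μ r (x - T * I)) atTop (𝓝 0) := by
  have hlim := ((tendsto_rpow_mul_exp_neg_mul_atTop_nhds_zero (2 * μ) (2 * π * r)
    (by positivity)).const_mul (4 ^ μ)).mul_const 2
  rw [mul_zero, zero_mul] at hlim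
  refine squeeze_zero_norm' ?_ hlim
  filter_upwards [eventually_ge_atTop 2] with T hT
  have h := intervalIntegral.norm_integral_le_of_norm_le_const fun x hx =>
    norm_contourIntegrand_bottom_le (r := r) hμ
      (abs_le.2 ⟨(uIoc_of_le (by norm_num : (-1 : ℝ) ≤ 1) ▸ hx).1.le,
        (uIoc_of_le (by norm_num : (-1 : ℝ) ≤ 1) ▸ hx).2⟩) hT
  norm_num at h ⊢
  linarith

lemma norm_contourIntegrand_side_le {μ r ε s : ℝ} (hμ : 0 ≤ μ) (hr : μ ≤ r) (hε : ε ^ 2 = 1)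
    (hs : 0 ≤ s) :
    ‖contourIntegrand μ r (ε - s * I)‖ ≤ 2 ^ μ * (s ^ μ * Real.exp (-(π * r * s))) := by
  have hfactor : 1 - ((ε : ℂ) - s * I) ^ 2 = s * (s + 2 * ε * I) := by
    have hεc : (ε : ℂ) ^ 2 = 1 := by exact_mod_cast hε
    linear_combination -hεc - (s : ℂ) ^ 2 * Complex.I_sq
  have hε' : |ε| = 1 := by rw [← sq_eq_sq₀ (abs_nonneg ε) zero_le_one, sq_abs, hε, one_pow]
  -- `s + 2 ≤ 2 e^{s/2}`: once `μ ≤ r`, the factor `(s + 2)^μ` costs at most half of the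
  -- decay `e^{-2πrs}`.
  have hbase : ‖1 - ((ε : ℂ) - s * I) ^ 2‖ ≤ 2 * s * Real.exp (s / 2) := by
    have hsum : ‖(s : ℂ) + 2 * ε * I‖ ≤ s + 2 := by
      refine (norm_add_le _ _).trans_eq ?_
      simp [Complex.norm_real, abs_of_nonneg hs, hε']
    rw [hfactor, norm_mul, Complex.norm_real, Real.norm_eq_abs, abs_of_nonneg hs]
    nlinarith [Real.add_one_le_exp (s / 2)]
  have him : ((ε : ℂ) - s * I).im = -s := by simp
  calc ‖contourIntegrand μ r (ε - s * I)‖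
      ≤ Real.exp (2 * π * r * -s) * (2 * s * Real.exp (s / 2)) ^ μ := by
        rw [norm_contourIntegrand, him]; gcongr
    _ = 2 ^ μ * (s ^ μ * Real.exp (-(2 * π * r * s) + s / 2 * μ)) := by
        rw [Real.mul_rpow (by positivity) (by positivity), Real.mul_rpow zero_le_two hs,
          ← Real.exp_mul, Real.exp_add]
        ring_nf
    _ ≤ 2 ^ μ * (s ^ μ * Real.exp (-(π * r * s))) := by
        gcongr
        nlinarith [Real.pi_gt_three, mul_nonneg hs (hμ.trans hr)]

lemma integrableOn_contourIntegrand_side {μ r ε : ℝ} (hμ : 0 < μ) (hr : μ ≤ r) (hε : ε ^ 2 = 1) :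
    IntegrableOn (fun s : ℝ => contourIntegrand μ r (ε - s * I)) (Ioi 0) := by
  have hπr : 0 < π * r := mul_pos pi_pos (hμ.trans_le hr)
  have hmaj := (integrableOn_rpow_mul_exp_neg_mul (ν := μ) (by linarith) hπr).const_mul (2 ^ μ)
  refine hmaj.mono' ?_ ((ae_restrict_iff' measurableSet_Ioi).2 (.of_forall fun s hs =>
    norm_contourIntegrand_side_le hμ.le hr hε (le_of_lt hs)))
  refine ContinuousOn.aestronglyMeasurable (fun s hs => ?_) measurableSet_Ioi
  refine ((continuousAt_contourIntegrand hμ r fun him => ?_).comp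
    (f := fun s : ℝ => (ε : ℂ) - s * I) (by fun_prop)).continuousWithinAt
  simp only [sub_im, ofReal_im, mul_im, ofReal_re, I_im, I_re] at him
  linarith [mem_Ioi.1 hs]

lemma norm_integral_contourIntegrand_side_le {μ r ε : ℝ} (hμ : 0 < μ) (hr : μ ≤ r)
    (hε : ε ^ 2 = 1) :
    ‖∫ s in Ioi (0 : ℝ), contourIntegrand μ r (ε - s * I)‖ ≤
      2 ^ μ * Real.Gamma (μ + 1) * (π * r) ^ (-(μ + 1)) := by
  have hπr : 0 < π * r := mul_pos pi_pos (hμ.trans_le hr)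
  have hmaj := (integrableOn_rpow_mul_exp_neg_mul (ν := μ) (by linarith) hπr).const_mul (2 ^ μ)
  refine (norm_integral_le_of_norm_le hmaj ((ae_restrict_iff' measurableSet_Ioi).2
    (.of_forall fun s hs => norm_contourIntegrand_side_le hμ.le hr hε (le_of_lt hs)))).trans_eq ?_
  have hΓ := integral_rpow_mul_exp_neg_mul_Ioi (a := μ + 1) (by linarith) hπr
  rw [add_sub_cancel_right] at hΓ
  rw [integral_const_mul, hΓ, one_div, Real.inv_rpow hπr.le, ← Real.rpow_neg hπr.le]
  ring

lemma fourier_profile_eq_side_integrals {μ r : ℝ} (hμ : 0 < μ) (hr : μ ≤ r) :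
    𝓕 (fun t : ℝ => (profile μ t : ℂ)) r =
      I • (∫ s in Ioi (0 : ℝ), contourIntegrand μ r (1 - s * I)) -
        I • ∫ s in Ioi (0 : ℝ), contourIntegrand μ r (-1 - s * I) := by
  have hside : ∀ ε : ℝ, ε ^ 2 = 1 → Tendsto (fun T => ∫ s in (0 : ℝ)..T,
      contourIntegrand μ r (ε - s * I)) atTop (𝓝 (∫ s in Ioi (0 : ℝ),
        contourIntegrand μ r (ε - s * I))) := fun ε hε =>
    intervalIntegral_tendsto_integral_Ioi 0 (integrableOn_contourIntegrand_side hμ hr hε)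
      tendsto_id
  have hlim := ((tendsto_integral_contourIntegrand_bottom hμ.le (hμ.trans_le hr)).add
    ((hside 1 (one_pow 2)).const_smul I)).sub ((hside (-1) (by norm_num)).const_smul I)
  push_cast at hlim
  rw [zero_add] at hlim
  refine tendsto_nhds_unique (tendsto_const_nhds.congr' ?_) hlim
  filter_upwards [eventually_gt_atTop 0] with T hT
  rw [fourier_profile_eq_intervalIntegral hμ, intervalIntegral_contourIntegrand_eq_sides hμ r hT]

lemma norm_fourier_profile_le_of_le {μ r : ℝ} (hμ : 0 < μ) (hr : μ ≤ r) :
    ‖𝓕 (fun t : ℝ => (profile μ t : ℂ)) r‖ ≤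
      2 ^ (μ + 1) * Real.Gamma (μ + 1) * π ^ (-(μ + 1)) * r ^ (-(μ + 1)) := by
  have h₁ := norm_integral_contourIntegrand_side_le hμ hr (ε := 1) (one_pow 2)
  have h₂ := norm_integral_contourIntegrand_side_le hμ hr (ε := -1) (by norm_num)
  push_cast at h₁ h₂
  rw [Real.mul_rpow pi_pos.le (hμ.le.trans hr)] at h₁ h₂
  rw [fourier_profile_eq_side_integrals hμ hr]
  refine (norm_sub_le _ _).trans ?_
  rw [norm_smul, norm_smul, Complex.norm_I, one_mul, one_mul, Real.rpow_add_one two_ne_zero]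
  linarith

lemma norm_fourier_profile_le_two {μ : ℝ} (hμ : 0 < μ) (r : ℝ) :
    ‖𝓕 (fun t : ℝ => (profile μ t : ℂ)) r‖ ≤ 2 := by
  rw [fourier_profile_eq_intervalIntegral hμ]
  refine (intervalIntegral.norm_integral_le_of_norm_le_const fun t ht => ?_).trans_eq
    (by norm_num : 1 * |(1 : ℝ) - -1| = 2)
  rw [uIoc_of_le (by norm_num)] at ht
  have ht' : 0 ≤ 1 - t ^ 2 := by nlinarith [ht.1, ht.2]
  rw [norm_contourIntegrand, Complex.ofReal_im, mul_zero, Real.exp_zero, one_mul,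
    ← Complex.ofReal_pow, ← Complex.ofReal_one, ← Complex.ofReal_sub, Complex.norm_real,
    Real.norm_of_nonneg ht']
  exact Real.rpow_le_one ht' (by nlinarith) hμ.le

theorem norm_fourier_profile_le {μ : ℝ} (hμ : 0 < μ) : ∃ C, 0 < C ∧ ∀ r, 0 ≤ r →
    ‖𝓕 (fun t : ℝ => (profile μ t : ℂ)) r‖ ≤ C * (1 + r) ^ (-(μ + 1)) :=
  exists_le_mul_one_add_rpow_neg (by linarith) hμ
    (fun r _ _ => norm_fourier_profile_le_two hμ r)
    (fun _ hr => norm_fourier_profile_le_of_le hμ hr)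

lemma brKernel_eq_of_norm_eq {n : ℕ} (δ : ℝ) {x y : Rn n} (h : ‖x‖ = ‖y‖) :
    brKernel n δ x = brKernel n δ y := by
  set A := (ℝ ∙ (y - x))ᗮ.reflection
  have hA : A y = x := Submodule.reflection_sub h.symm
  have hf : (fun ξ : Rn n => (profile δ ‖ξ‖ : ℂ)) ∘ A = fun ξ => (profile δ ‖ξ‖ : ℂ) := by
    ext ξ; simp [A]
  change 𝓕 (fun ξ : Rn n => (profile δ ‖ξ‖ : ℂ)) x = 𝓕 (fun ξ : Rn n => (profile δ ‖ξ‖ : ℂ)) y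
  rw [← hA, ← Real.fourier_comp_linearIsometry, hf]

def sliceConst (m : ℕ) (δ : ℝ) : ℝ := ∫ u : Fin m → ℝ, ((1 - ∑ i, u i ^ 2) ⊔ 0) ^ δ

lemma sliceConst_nonneg (m : ℕ) (δ : ℝ) : 0 ≤ sliceConst m δ :=
  integral_nonneg fun _ => Real.rpow_nonneg le_sup_right δ

lemma integral_sub_sum_sq_sup_zero_rpow {m : ℕ} {δ : ℝ} (hδ : 0 < δ) (a : ℝ) :
    ∫ u : Fin m → ℝ, ((a - ∑ i, u i ^ 2) ⊔ 0) ^ δ = (a ⊔ 0) ^ (δ + m / 2) * sliceConst m δ := by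
  rcases le_or_gt a 0 with ha | ha
  · have hzero : ∀ u : Fin m → ℝ, ((a - ∑ i, u i ^ 2) ⊔ 0) ^ δ = 0 := fun u => by
      have := Finset.sum_nonneg fun i (_ : i ∈ Finset.univ) => sq_nonneg (u i)
      rw [sup_eq_right.2 (by linarith), Real.zero_rpow hδ.ne']
    simp only [hzero, integral_zero, sup_eq_right.2 ha]
    rw [Real.zero_rpow (by positivity), zero_mul]
  · have hscale := Measure.integral_comp_smul_of_nonneg (volume : Measure (Fin m → ℝ))
      (fun u : Fin m → ℝ => ((a - ∑ i, u i ^ 2) ⊔ 0) ^ δ) (√a) (hR := Real.sqrt_nonneg a)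
    have hcomp : ∀ u : Fin m → ℝ, ((a - ∑ i, ((√a • u) i) ^ 2) ⊔ 0) ^ δ =
        a ^ δ * ((1 - ∑ i, u i ^ 2) ⊔ 0) ^ δ := fun u => by
      simp only [Pi.smul_apply, smul_eq_mul, mul_pow, Real.sq_sqrt ha.le, ← Finset.mul_sum]
      rw [← Real.mul_rpow ha.le le_sup_right, mul_max_of_nonneg _ _ ha.le, mul_sub, mul_one,
        mul_zero]
    have hsqrt : √a ^ m = a ^ ((m : ℝ) / 2) := by
      rw [Real.sqrt_eq_rpow, ← Real.rpow_natCast, ← Real.rpow_mul ha.le]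
      ring_nf
    simp only [hcomp, integral_const_mul, Module.finrank_fintype_fun_eq_card, Fintype.card_fin,
      smul_eq_mul] at hscale
    have hpos : 0 < √a ^ m := pow_pos (Real.sqrt_pos.2 ha) m
    rw [sup_eq_left.2 ha.le, Real.rpow_add ha, sliceConst, mul_right_comm, hscale, ← hsqrt]
    field_simp

lemma integrable_profile_norm {n : ℕ} {δ : ℝ} (hδ : 0 < δ) :
    Integrable fun ξ : Rn n => (profile δ ‖ξ‖ : ℂ) := by
  refine (Complex.continuous_ofReal.comp ((continuous_profile hδ).comp continuous_norm))
    |>.integrable_of_hasCompactSupport (.intro (isCompact_closedBall 0 1) fun ξ hξ => ?_)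
  rw [mem_closedBall_zero_iff, not_le] at hξ
  simp only [Function.comp_apply, profile_eq_zero hδ fun h : ‖ξ‖ ∈ Ioo (-1) 1 => hξ.not_gt h.2,
    Complex.ofReal_zero]

def sliceEquiv (m : ℕ) : ℝ × (Fin m → ℝ) ≃ᵐ Rn (m + 1) :=
  (MeasurableEquiv.piFinSuccAbove (fun _ => ℝ) 0).symm.trans (MeasurableEquiv.toLp 2 _)

lemma measurePreserving_sliceEquiv (m : ℕ) : MeasurePreserving (sliceEquiv m) :=
  ((volume_preserving_piFinSuccAbove (fun _ => ℝ) 0).symm _).trans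
    (EuclideanSpace.volume_preserving_symm_measurableEquiv_toLp _).symm

lemma norm_sliceEquiv_sq {m : ℕ} (p : ℝ × (Fin m → ℝ)) :
    ‖sliceEquiv m p‖ ^ 2 = p.1 ^ 2 + ∑ i, p.2 i ^ 2 := by
  rw [EuclideanSpace.norm_eq, Real.sq_sqrt (by positivity), Fin.sum_univ_succAbove _ 0]
  simp [sliceEquiv]

lemma inner_sliceEquiv_single_zero {m : ℕ} (p : ℝ × (Fin m → ℝ)) (r : ℝ) :
    inner ℝ (sliceEquiv m p) (r • EuclideanSpace.single 0 1) = p.1 * r := by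
  simp [sliceEquiv, real_inner_smul_right, EuclideanSpace.inner_single_right, mul_comm]

lemma brKernel_smul_single_zero {m : ℕ} {δ : ℝ} (hδ : 0 < δ) (r : ℝ) :
    brKernel (m + 1) δ (r • EuclideanSpace.single 0 1) =
      sliceConst m δ • 𝓕 (fun t : ℝ => (profile (δ + m / 2) t : ℂ)) r := by
  set g := fun ξ : Rn (m + 1) =>
    𝐞 (-inner ℝ ξ (r • EuclideanSpace.single 0 1)) • (profile δ ‖ξ‖ : ℂ)
  have hg : Integrable (g ∘ sliceEquiv m) (volume.prod volume) :=
    ((measurePreserving_sliceEquiv m).integrable_comp_emb (sliceEquiv m).measurableEmbedding).2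
      ((Real.fourierIntegral_convergent_iff _).2 (integrable_profile_norm hδ))
  have hslice : ∀ t : ℝ, ∫ u, g (sliceEquiv m (t, u)) =
      sliceConst m δ • 𝐞 (-(t * r)) • (profile (δ + m / 2) t : ℂ) := fun t => by
    simp only [g, profile, inner_sliceEquiv_single_zero, norm_sliceEquiv_sq, Circle.smul_def,
      smul_eq_mul]
    rw [integral_const_mul, integral_complex_ofReal]
    simp only [sub_add_eq_sub_sub, integral_sub_sum_sq_sup_zero_rpow hδ, Complex.real_smul]
    push_cast
    ring
  change 𝓕 (fun ξ : Rn (m + 1) => (profile δ ‖ξ‖ : ℂ)) _ = _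
  rw [Real.fourier_eq, ← (measurePreserving_sliceEquiv m).integral_comp', Measure.volume_eq_prod]
  change ∫ p, (g ∘ sliceEquiv m) p ∂(volume.prod volume) = _
  rw [integral_prod _ hg, Real.fourier_real_eq, ← integral_smul]
  exact integral_congr_ae (.of_forall fun t => hslice t)

theorem norm_brKernel_le {m : ℕ} {δ : ℝ} (hδ : 0 < δ) : ∃ C, 0 < C ∧ ∀ x : Rn (m + 1),
    ‖brKernel (m + 1) δ x‖ ≤ C * (1 + ‖x‖) ^ (-(δ + m / 2 + 1)) := by
  obtain ⟨C, hC, hdecay⟩ := norm_fourier_profile_le (μ := δ + m / 2) (by positivity)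
  have hK := sliceConst_nonneg m δ
  refine ⟨(sliceConst m δ + 1) * C, by positivity, fun x => ?_⟩
  have hx : ‖x‖ = ‖‖x‖ • EuclideanSpace.single (0 : Fin (m + 1)) (1 : ℝ)‖ := by simp [norm_smul]
  rw [brKernel_eq_of_norm_eq δ hx, brKernel_smul_single_zero hδ, norm_smul,
    Real.norm_of_nonneg hK]
  have hpos : 0 ≤ C * (1 + ‖x‖) ^ (-(δ + m / 2 + 1)) := by positivity
  nlinarith [mul_le_mul_of_nonneg_left (hdecay ‖x‖ (norm_nonneg x)) hK]

end BochnerRiesz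

/-- Pointwise decay estimate for the Bochner–Riesz kernel:
`|φ^δ(x)| ≤ C (1 + |x|)^{-((n+1)/2 + δ)}` for `δ ≥ (n-1)/2`. -/
theorem brKernel_decay (n : ℕ) (hn : 2 ≤ n) (δ : ℝ) (hδ : ((n : ℝ) - 1) / 2 ≤ δ) :
    ∃ C : ℝ, 0 < C ∧ ∀ x : Rn n,
      ‖brKernel n δ x‖ ≤ C * (1 + ‖x‖) ^ (-(((n : ℝ) + 1) / 2 + δ)) := by
  obtain ⟨m, rfl⟩ : ∃ m, n = m + 1 := ⟨n - 1, by omega⟩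
  have hm : (1 : ℝ) ≤ m := by exact_mod_cast (by omega : 1 ≤ m)
  push_cast at hδ ⊢
  obtain ⟨C, hC, hbound⟩ := BochnerRiesz.norm_brKernel_le (m := m) (by linarith : 0 < δ)
  refine ⟨C, hC, fun x => (hbound x).trans_eq ?_⟩
  ring_nf
end
end

section
/- Let n ≥ 2 and δ = (n−1)/2. There exists a constant C > 0 such that for every ball B = B(x₀, r_B) ⊂ ℝⁿ, every locally integrable function f that vanishes on the ball 2B, and every x ∈ B, the maximal Bochner-Riesz operator satisfies T^δ_* f(x) ≤ C · Σ_{j=1}^∞ |2^{j+1}B|⁻¹ ∫_{2^{j+1}B} |f(y)| dy. -/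
/-! For `n = m + 1` and `δ = m / 2` the kernel `φ^δ` is radial, and integrating out the last `m`
coordinates gives `φ^δ(s e₁) = c ∫_{-1}^{1} e^{-2πist} (1 - t²)^m dt`. The polynomial
`(1 - t²)^m` vanishes to order `m` at `±1`, so `m + 1` integrations by parts give
`|φ^δ(w)| ≲ |w|^{-n}` for `|w| ≥ 1`, while `|φ^δ| ≤ ‖(1 - |ξ|²)₊^δ‖₁` everywhere. This size
bound is invariant under the dilations `Rⁿ φ^δ(R ·)`. For `x ∈ B` and `f` vanishing on `2B`,
split `(2B)ᶜ` into the annuli `2^{j+2}B \ 2^{j+1}B`, on which `|x - y| ≥ 2^j r`: the kernel is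
there at most `A (2^j r)^{-n} ≈ |2^{j+2}B|⁻¹`, which bounds `|T^δ_R f(x)|` uniformly in `R`. -/

open MeasureTheory Metric ENNReal

noncomputable section

section OscillatoryIntegral

open Polynomial

def expPolyIntegral (z : ℂ) (p : ℝ[X]) : ℂ :=
  ∫ t in (-1 : ℝ)..1, Complex.exp (z * t) * ((p.eval t : ℝ) : ℂ)

lemma expPolyIntegral_eq_sub_derivative {z : ℂ} (hz : z ≠ 0) (p : ℝ[X]) :
    expPolyIntegral z p = (p.eval 1 * Complex.exp z - p.eval (-1) * Complex.exp (-z)) / z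
      - expPolyIntegral z (derivative p) / z := by
  have hp : ∀ t ∈ Set.uIcc (-1 : ℝ) 1,
      HasDerivAt (fun t : ℝ => ((p.eval t : ℝ) : ℂ)) (((derivative p).eval t : ℝ) : ℂ) t :=
    fun t _ => (p.hasDerivAt t).ofReal_comp
  have hexp : ∀ t ∈ Set.uIcc (-1 : ℝ) 1,
      HasDerivAt (fun t : ℝ => Complex.exp (z * t) / z) (Complex.exp (z * t)) t := by
    intro t _
    have := ((hasDerivAt_id (t : ℂ)).const_mul z).cexp.comp_ofReal.div_const z
    simpa [mul_div_cancel_right₀ _ hz] using this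
  have hcont : Continuous fun t : ℝ => Complex.exp (z * t) := by fun_prop
  have ibp := intervalIntegral.integral_mul_deriv_eq_deriv_mul hp hexp
    ((Complex.continuous_ofReal.comp (derivative p).continuous).intervalIntegrable _ _)
    (hcont.intervalIntegrable _ _)
  simp only [expPolyIntegral, mul_comm (Complex.exp _), ← mul_div_assoc,
    intervalIntegral.integral_div] at ibp ⊢
  rw [ibp]
  push_cast
  rw [mul_one, mul_neg_one]
  ring

lemma norm_expPolyIntegral_le {z : ℂ} (hz : z.re = 0) {p : ℝ[X]} {M : ℝ}
    (hM : ∀ t ∈ Set.Icc (-1 : ℝ) 1, |p.eval t| ≤ M) :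
    ‖expPolyIntegral z p‖ ≤ 2 * M := by
  have h := intervalIntegral.norm_integral_le_of_norm_le_const (a := -1) (b := 1) (C := M)
    (f := fun t : ℝ => Complex.exp (z * t) * ((p.eval t : ℝ) : ℂ)) fun t ht => by
      rw [norm_mul, Complex.norm_exp, Complex.re_mul_ofReal, hz, zero_mul, Real.exp_zero,
        one_mul, Complex.norm_real, Real.norm_eq_abs]
      exact hM t (Set.uIcc_of_le (by norm_num : (-1 : ℝ) ≤ 1) ▸ Set.uIoc_subset_uIcc ht)
  norm_num at h
  rw [expPolyIntegral]
  linarith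

lemma exists_norm_expPolyIntegral_le_div (p : ℝ[X]) :
    ∃ K, 0 ≤ K ∧ ∀ z : ℂ, z.re = 0 → z ≠ 0 → ‖expPolyIntegral z p‖ ≤ K / ‖z‖ := by
  obtain ⟨M, hM⟩ := (isCompact_Icc (a := (-1 : ℝ)) (b := 1)).exists_bound_of_continuousOn
    (derivative p).continuous.continuousOn
  have hM0 : 0 ≤ M := (norm_nonneg _).trans (hM 0 ⟨by norm_num, by norm_num⟩)
  refine ⟨|p.eval 1| + |p.eval (-1)| + 2 * M, by positivity, fun z hz hz0 => ?_⟩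
  have hexp : ∀ w : ℂ, w.re = 0 → ‖Complex.exp w‖ = 1 := fun w hw => by
    rw [Complex.norm_exp, hw, Real.exp_zero]
  rw [expPolyIntegral_eq_sub_derivative hz0, ← sub_div, norm_div]
  gcongr
  calc _ ≤ ‖((p.eval 1 : ℝ) : ℂ) * Complex.exp z‖ + ‖((p.eval (-1) : ℝ) : ℂ) * Complex.exp (-z)‖
        + ‖expPolyIntegral z (derivative p)‖ := norm_sub_le_of_le (norm_sub_le _ _) le_rfl
    _ ≤ _ := by
      rw [norm_mul, norm_mul, hexp z hz, hexp (-z) (by simp [hz]), Complex.norm_real,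
        Complex.norm_real, mul_one, mul_one, Real.norm_eq_abs, Real.norm_eq_abs]
      gcongr
      exact norm_expPolyIntegral_le hz fun t ht => by simpa using hM t ht

lemma expPolyIntegral_eq_iterate_derivative {z : ℂ} (hz : z ≠ 0) (m : ℕ) {p : ℝ[X]}
    (hp : ∀ k < m, (derivative^[k] p).eval 1 = 0 ∧ (derivative^[k] p).eval (-1) = 0) :
    expPolyIntegral z p = (-z⁻¹) ^ m * expPolyIntegral z (derivative^[m] p) := by
  induction m generalizing p with
  | zero => simp
  | succ m ih =>
    obtain ⟨h1, h2⟩ := hp 0 m.succ_pos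
    simp only [Function.iterate_zero_apply] at h1 h2
    rw [Function.iterate_succ_apply, expPolyIntegral_eq_sub_derivative hz,
      ih fun k hk => hp (k + 1) (by omega), h1, h2]
    push_cast
    rw [pow_succ]
    ring

lemma exists_norm_expPolyIntegral_le_div_pow (m : ℕ) {p : ℝ[X]}
    (hp : ∀ k < m, (derivative^[k] p).eval 1 = 0 ∧ (derivative^[k] p).eval (-1) = 0) :
    ∃ K, 0 ≤ K ∧ ∀ z : ℂ, z.re = 0 → z ≠ 0 → ‖expPolyIntegral z p‖ ≤ K / ‖z‖ ^ (m + 1) := by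
  obtain ⟨K, hK0, hK⟩ := exists_norm_expPolyIntegral_le_div (derivative^[m] p)
  refine ⟨K, hK0, fun z hz hz0 => ?_⟩
  rw [expPolyIntegral_eq_iterate_derivative hz0 m hp, norm_mul, norm_pow, norm_neg, norm_inv]
  calc ‖z‖⁻¹ ^ m * ‖expPolyIntegral z (derivative^[m] p)‖ ≤ ‖z‖⁻¹ ^ m * (K / ‖z‖) := by
        gcongr; exact hK z hz hz0
    _ = K / ‖z‖ ^ (m + 1) := by rw [pow_succ, inv_pow]; ring

lemma eval_iterate_derivative_one_sub_X_sq_pow {m k : ℕ} (hk : k < m) {x : ℝ} (hx : x ^ 2 = 1) :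
    (derivative^[k] ((1 - X ^ 2 : ℝ[X]) ^ m)).eval x = 0 := by
  obtain ⟨q, hq⟩ := pow_sub_dvd_iterate_derivative_pow (1 - X ^ 2 : ℝ[X]) m k
  rw [hq, eval_mul, eval_pow, eval_sub, eval_one, eval_pow, eval_X, hx, sub_self,
    zero_pow (by omega), zero_mul]

end OscillatoryIntegral

section BochnerRieszKernel

open Real FourierTransform Polynomial

lemma brKernel_eq_of_norm_eq {n : ℕ} (δ : ℝ) {v w : Rn n} (h : ‖v‖ = ‖w‖) :
    brKernel n δ v = brKernel n δ w := by
  let F : Rn n → ℂ := fun ξ => ((((1 - ‖ξ‖ ^ 2) ⊔ 0) ^ δ : ℝ) : ℂ)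
  let A := (ℝ ∙ (v - w))ᗮ.reflection
  have hF : F ∘ A = F := funext fun ξ => by simp [F, A]
  change 𝓕 F v = 𝓕 F w
  rw [← hF, fourier_comp_linearIsometry, hF, Submodule.reflection_sub h]

lemma integral_sub_sum_sq_posPart_rpow (m : ℕ) {δ : ℝ} (hδ : 0 < δ) (a : ℝ) :
    ∫ y : Fin m → ℝ, ((a - ∑ i, y i ^ 2) ⊔ 0) ^ δ
      = (∫ y : Fin m → ℝ, ((1 - ∑ i, y i ^ 2) ⊔ 0) ^ δ) * (a ⊔ 0) ^ (δ + m / 2) := by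
  rcases le_or_gt a 0 with ha | ha
  · have hzero : ∀ y : Fin m → ℝ, ((a - ∑ i, y i ^ 2) ⊔ 0) ^ δ = 0 := fun y => by
      have : 0 ≤ ∑ i, y i ^ 2 := Finset.sum_nonneg fun i _ => sq_nonneg (y i)
      rw [max_eq_right (by linarith), zero_rpow hδ.ne']
    simp only [hzero, integral_zero, max_eq_right ha]
    rw [zero_rpow (by positivity), mul_zero]
  · have hscale : ∀ y : Fin m → ℝ, ((a - ∑ i, (√a • y) i ^ 2) ⊔ 0) ^ δ
        = a ^ δ * ((1 - ∑ i, y i ^ 2) ⊔ 0) ^ δ := fun y => by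
      simp only [Pi.smul_apply, smul_eq_mul, mul_pow, sq_sqrt ha.le, ← Finset.mul_sum]
      rw [← mul_one_sub, ← mul_rpow ha.le (le_max_right _ _), mul_max_of_nonneg _ _ ha.le,
        mul_zero]
    have hchange := Measure.integral_comp_smul_of_nonneg (volume : Measure (Fin m → ℝ))
      (fun y : Fin m → ℝ => ((a - ∑ i, y i ^ 2) ⊔ 0) ^ δ) √a (hR := sqrt_nonneg a)
    simp only [hscale, integral_const_mul, Module.finrank_fin_fun, smul_eq_mul] at hchange
    have hsqrt : √a ^ m = a ^ ((m : ℝ) / 2) := by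
      rw [sqrt_eq_rpow, ← Real.rpow_natCast, ← rpow_mul ha.le]; ring_nf
    rw [max_eq_left ha.le, rpow_add ha, ← hsqrt]
    field_simp at hchange ⊢
    linarith

lemma integral_euclideanSpace_eq_integral_integral_cons {E : Type*} [NormedAddCommGroup E]
    [NormedSpace ℝ E] {m : ℕ} {g : EuclideanSpace ℝ (Fin (m + 1)) → E} (hg : Integrable g) :
    ∫ ξ, g ξ = ∫ t : ℝ, ∫ y : Fin m → ℝ, g (WithLp.toLp 2 (Fin.cons t y)) := by
  let e := (MeasurableEquiv.piFinSuccAbove (fun _ : Fin (m + 1) => ℝ) 0).symm.trans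
    (MeasurableEquiv.toLp 2 (Fin (m + 1) → ℝ))
  have he : MeasurePreserving e :=
    (PiLp.volume_preserving_toLp _).comp (volume_preserving_piFinSuccAbove _ 0).symm
  have hcons : ∀ p : ℝ × (Fin m → ℝ), e p = WithLp.toLp 2 (Fin.cons p.1 p.2) := fun p => by
    simp [e, MeasurableEquiv.piFinSuccAbove_symm_apply, Fin.insertNthEquiv, Fin.insertNth_zero']
  have hge : Integrable (fun p => g (e p)) (volume.prod volume) :=
    (he.integrable_comp_emb e.measurableEmbedding).mpr hg
  rw [← he.integral_comp' g, Measure.volume_eq_prod, integral_prod _ hge]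
  simp only [hcons]

lemma one_sub_sq_posPart_rpow_eq_zero {x δ : ℝ} (hδ : 0 < δ) (hx : 1 ≤ |x|) :
    ((1 - x ^ 2) ⊔ 0) ^ δ = 0 := by
  rw [max_eq_right (by nlinarith [sq_abs x]), zero_rpow hδ.ne']

lemma exists_brKernel_smul_single_eq (m : ℕ) {δ : ℝ} (hδ : 0 < δ) : ∃ c : ℝ, ∀ s : ℝ,
    brKernel (m + 1) δ (s • EuclideanSpace.single 0 1) =
      c * 𝓕 (fun t : ℝ => ((((1 - t ^ 2) ⊔ 0) ^ (δ + m / 2) : ℝ) : ℂ)) s := by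
  refine ⟨∫ y : Fin m → ℝ, ((1 - ∑ i, y i ^ 2) ⊔ 0) ^ δ, fun s => ?_⟩
  let F : Rn (m + 1) → ℂ := fun ξ =>
    Complex.exp (↑(-2 * π * inner ℝ ξ (s • EuclideanSpace.single 0 1 : Rn (m + 1))) * Complex.I) •
      ((((1 - ‖ξ‖ ^ 2) ⊔ 0) ^ δ : ℝ) : ℂ)
  have hF : Integrable F := by
    have hsupp : HasCompactSupport F :=
      HasCompactSupport.intro (isCompact_closedBall 0 1) fun ξ hξ => by
        rw [mem_closedBall_zero_iff, not_le] at hξ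
        simp [F, one_sub_sq_posPart_rpow_eq_zero hδ (abs_norm ξ ▸ hξ.le)]
    have hδ' := hδ.le
    refine Continuous.integrable_of_hasCompactSupport ?_ hsupp
    dsimp only [F]
    fun_prop (disch := assumption)
  have hcons : ∀ (t : ℝ) (y : Fin m → ℝ), F (WithLp.toLp 2 (Fin.cons t y)) =
      Complex.exp (↑(-2 * π * t * s) * Complex.I) *
        ((((1 - t ^ 2 - ∑ i, y i ^ 2) ⊔ 0) ^ δ : ℝ) : ℂ) := fun t y => by
    simp only [F, EuclideanSpace.real_norm_sq_eq, Fin.sum_univ_succ, real_inner_smul_right,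
      EuclideanSpace.inner_single_right]
    simp only [Fin.cons_zero, Fin.cons_succ, starRingEnd_apply, star_trivial]
    push_cast
    ring_nf
  show 𝓕 (fun ξ : Rn (m + 1) => ((((1 - ‖ξ‖ ^ 2) ⊔ 0) ^ δ : ℝ) : ℂ)) _ = _
  rw [fourier_eq', integral_euclideanSpace_eq_integral_integral_cons hF,
    fourier_real_eq_integral_exp_smul, ← integral_const_mul]
  congr 1
  ext t
  rw [smul_eq_mul]
  simp only [hcons]
  rw [integral_const_mul, integral_complex_ofReal, integral_sub_sum_sq_posPart_rpow m hδ]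
  push_cast
  ring

lemma fourier_one_sub_sq_posPart_rpow_natCast {m : ℕ} (hm : m ≠ 0) (s : ℝ) :
    𝓕 (fun t : ℝ => ((((1 - t ^ 2) ⊔ 0) ^ (m : ℝ) : ℝ) : ℂ)) s
      = expPolyIntegral (-(2 * π * s) * Complex.I) ((1 - X ^ 2) ^ m) := by
  have hsupp : ∀ t ∉ Set.Ioc (-1 : ℝ) 1, Complex.exp (↑(-2 * π * t * s) * Complex.I) •
      ((((1 - t ^ 2) ⊔ 0) ^ (m : ℝ) : ℝ) : ℂ) = 0 := fun t ht => by
    have h1 : 1 ≤ |t| := by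
      rw [Set.mem_Ioc, not_and_or, not_lt, not_le] at ht
      rw [le_abs']
      rcases ht with h | h
      · exact Or.inl h
      · exact Or.inr h.le
    rw [one_sub_sq_posPart_rpow_eq_zero (by positivity) h1, Complex.ofReal_zero, smul_zero]
  rw [fourier_real_eq_integral_exp_smul, ← setIntegral_eq_integral_of_forall_compl_eq_zero hsupp,
    ← intervalIntegral.integral_of_le (by norm_num), expPolyIntegral]
  refine intervalIntegral.integral_congr fun t ht => ?_
  rw [Set.uIcc_of_le (by norm_num), Set.mem_Icc] at ht
  have h1 : 0 ≤ 1 - t ^ 2 := by nlinarith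
  simp only [smul_eq_mul, max_eq_left h1, Real.rpow_natCast, eval_pow, eval_sub, eval_one,
    eval_X]
  push_cast
  ring_nf

lemma exists_norm_brKernel_le_of_one_le {m : ℕ} (hm : m ≠ 0) : ∃ B, 0 ≤ B ∧
    ∀ w : Rn (m + 1), 1 ≤ ‖w‖ → ‖brKernel (m + 1) (m / 2) w‖ ≤ B / ‖w‖ ^ (m + 1) := by
  obtain ⟨c, hc⟩ := exists_brKernel_smul_single_eq m (δ := m / 2) (by positivity)
  obtain ⟨K, hK0, hK⟩ := exists_norm_expPolyIntegral_le_div_pow m (p := (1 - X ^ 2) ^ m)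
    fun k hk => ⟨eval_iterate_derivative_one_sub_X_sq_pow hk (by norm_num),
      eval_iterate_derivative_one_sub_X_sq_pow hk (by norm_num)⟩
  refine ⟨|c| * K, by positivity, fun w hw => ?_⟩
  set z : ℂ := -(2 * π * ‖w‖) * Complex.I
  have hz_re : z.re = 0 := by simp [z]
  have hz_norm : ‖z‖ = 2 * π * ‖w‖ := by
    simp [z, abs_of_pos pi_pos]
  have hwz : ‖w‖ ≤ ‖z‖ := by rw [hz_norm]; nlinarith [pi_gt_three]
  have hz0 : z ≠ 0 := norm_pos_iff.mp (by linarith)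
  have hexponent : (m : ℝ) / 2 + m / 2 = (m : ℝ) := by ring
  rw [brKernel_eq_of_norm_eq _ (w := ‖w‖ • EuclideanSpace.single 0 1)
    (by rw [norm_smul, norm_norm, PiLp.norm_single, norm_one, mul_one]), hc, hexponent,
    fourier_one_sub_sq_posPart_rpow_natCast hm, norm_mul, Complex.norm_real, Real.norm_eq_abs,
    mul_div_assoc]
  gcongr
  calc _ ≤ K / ‖z‖ ^ (m + 1) := hK z hz_re hz0
    _ ≤ K / ‖w‖ ^ (m + 1) := by gcongr

lemma exists_norm_brKernel_le {n : ℕ} (hn : 2 ≤ n) : ∃ A, 0 < A ∧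
    ∀ w : Rn n, w ≠ 0 → ‖brKernel n ((n - 1 : ℝ) / 2) w‖ ≤ A / ‖w‖ ^ n := by
  obtain ⟨m, rfl⟩ : ∃ m, n = m + 1 := ⟨n - 1, by omega⟩
  have hδ : ((↑(m + 1) : ℝ) - 1) / 2 = m / 2 := by push_cast; ring
  obtain ⟨B, hB0, hB⟩ := exists_norm_brKernel_le_of_one_le (m := m) (by omega)
  set A₀ := ∫ ξ : Rn (m + 1), ‖((((1 - ‖ξ‖ ^ 2) ⊔ 0) ^ ((m : ℝ) / 2) : ℝ) : ℂ)‖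
  have hA₀ : 0 ≤ A₀ := integral_nonneg fun _ => norm_nonneg _
  refine ⟨B + A₀ + 1, by positivity, fun w hw => ?_⟩
  have hw0 : 0 < ‖w‖ ^ (m + 1) := by positivity
  rw [hδ]
  rcases le_total ‖w‖ 1 with hw1 | hw1
  · calc ‖brKernel (m + 1) (m / 2) w‖ ≤ A₀ :=
          VectorFourier.norm_fourierIntegral_le_integral_norm _ _ _ _ _
      _ ≤ A₀ / ‖w‖ ^ (m + 1) := le_div_self hA₀ hw0 (pow_le_one₀ (norm_nonneg w) hw1)
      _ ≤ _ := by gcongr; linarith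
  · exact (hB w hw1).trans (by gcongr; linarith)

end BochnerRieszKernel

lemma compl_ball_subset_iUnion_annuli {X : Type*} [PseudoMetricSpace X] (x₀ : X) {r : ℝ}
    (hr : 0 < r) :
    (ball x₀ (2 * r))ᶜ ⊆ ⋃ j : ℕ, ball x₀ (2 ^ (j + 2) * r) \ ball x₀ (2 ^ (j + 1) * r) := by
  let s : ℕ → Set X := fun k => ball x₀ (2 ^ (k + 1) * r)
  have hs : Monotone s := fun k l hkl =>
    ball_subset_ball (by gcongr; exact one_le_two)
  intro y hy
  obtain ⟨k, hk⟩ := pow_unbounded_of_one_lt (dist y x₀ / r) one_lt_two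
  have hyk : y ∈ ⋃ k, disjointed s k := by
    rw [iUnion_disjointed]
    refine Set.mem_iUnion.mpr ⟨k, mem_ball.mpr ?_⟩
    rw [div_lt_iff₀ hr] at hk
    calc dist y x₀ < 2 ^ k * r := hk
      _ ≤ 2 ^ (k + 1) * r := by gcongr <;> [exact one_le_two; omega]
  obtain ⟨j, hj⟩ := Set.mem_iUnion.mp hyk
  cases j with
  | zero => exact absurd (disjointed_subset s 0 hj) (by simpa [s] using hy)
  | succ j => exact Set.mem_iUnion.mpr ⟨j, hs.disjointed_add_one j ▸ hj⟩

lemma enorm_kernel_mul_le_of_mem_annulus {E : Type*} [NormedAddCommGroup E] {K : E → ℂ} {A : ℝ}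
    {d : ℕ} (hA : 0 ≤ A) (hK : ∀ w ≠ 0, ‖K w‖ ≤ A / ‖w‖ ^ d) {f : E → ℝ} {x₀ x y : E} {r : ℝ}
    (hr : 0 < r) (hx : x ∈ ball x₀ r) (j : ℕ) (hy : y ∉ ball x₀ (2 ^ (j + 1) * r)) :
    ‖K (x - y) * f y‖ₑ ≤ ENNReal.ofReal (A / (2 ^ j * r) ^ d) * ENNReal.ofReal |f y| := by
  have hxy : 2 ^ j * r ≤ ‖x - y‖ := by
    rw [mem_ball] at hx
    rw [mem_ball, not_lt] at hy
    have h1 : (1 : ℝ) ≤ 2 ^ j := one_le_pow₀ one_le_two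
    have := dist_triangle y x x₀
    rw [← dist_eq_norm, dist_comm]
    nlinarith [pow_succ (2 : ℝ) j]
  have hw : x - y ≠ 0 := norm_pos_iff.mp ((by positivity : (0 : ℝ) < 2 ^ j * r).trans_le hxy)
  rw [← ofReal_norm, norm_mul, Complex.norm_real, Real.norm_eq_abs,
    ← ENNReal.ofReal_mul (by positivity)]
  gcongr
  exact (hK _ hw).trans (by gcongr)

section SizeCondition

variable {E : Type*} [NormedAddCommGroup E] [NormedSpace ℝ E] [MeasurableSpace E]
  [BorelSpace E] [FiniteDimensional ℝ E] [Nontrivial E] (μ : Measure E) [μ.IsAddHaarMeasure]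

open Module

lemma ofReal_div_pow_eq_mul_inv_measure_ball (A : ℝ) (x₀ : E) {r : ℝ} (hr : 0 < r) (j : ℕ) :
    ENNReal.ofReal (A / (2 ^ j * r) ^ finrank ℝ E) =
      ENNReal.ofReal (A * 4 ^ finrank ℝ E * (μ (ball 0 1)).toReal) *
        (μ (ball x₀ (2 ^ (j + 2) * r)))⁻¹ := by
  have hv : 0 < (μ (ball (0 : E) 1)).toReal :=
    ENNReal.toReal_pos (measure_ball_pos μ _ one_pos).ne' measure_ball_lt_top.ne
  have hball : μ (ball x₀ (2 ^ (j + 2) * r)) =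
      ENNReal.ofReal ((2 ^ (j + 2) * r) ^ finrank ℝ E * (μ (ball 0 1)).toReal) := by
    rw [μ.addHaar_ball x₀ (by positivity), ENNReal.ofReal_mul (by positivity),
      ENNReal.ofReal_toReal measure_ball_lt_top.ne]
  rw [hball, ← ENNReal.ofReal_inv_of_pos (by positivity), ← ENNReal.ofReal_mul' (by positivity)]
  congr 1
  rw [pow_add, mul_pow, mul_pow, mul_pow]
  field_simp
  norm_num

lemma lintegral_enorm_kernel_mul_le_tsum_average {K : E → ℂ} {A : ℝ} (hA : 0 ≤ A)
    (hK : ∀ w ≠ 0, ‖K w‖ ≤ A / ‖w‖ ^ finrank ℝ E) {f : E → ℝ} {x₀ x : E} {r : ℝ}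
    (hr : 0 < r) (hf : ∀ y ∈ ball x₀ (2 * r), f y = 0) (hx : x ∈ ball x₀ r) :
    ∫⁻ y, ‖K (x - y) * f y‖ₑ ∂μ ≤
      ENNReal.ofReal (A * 4 ^ finrank ℝ E * (μ (ball 0 1)).toReal) * ∑' j : ℕ,
        (μ (ball x₀ (2 ^ (j + 2) * r)))⁻¹ *
          ∫⁻ y in ball x₀ (2 ^ (j + 2) * r), ENNReal.ofReal |f y| ∂μ := by
  set g : E → ℝ≥0∞ := fun y => ‖K (x - y) * f y‖ₑ
  let S : ℕ → Set E := fun j => ball x₀ (2 ^ (j + 2) * r) \ ball x₀ (2 ^ (j + 1) * r)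
  have hsupp : Function.support g ⊆ (ball x₀ (2 * r))ᶜ := fun y hy hy' => hy (by simp [g, hf y hy'])
  have hannulus : ∀ j, ∫⁻ y in S j, g y ∂μ ≤ ENNReal.ofReal (A / (2 ^ j * r) ^ finrank ℝ E) *
      ∫⁻ y in ball x₀ (2 ^ (j + 2) * r), ENNReal.ofReal |f y| ∂μ := fun j => calc
    ∫⁻ y in S j, g y ∂μ ≤ ∫⁻ y in S j, ENNReal.ofReal (A / (2 ^ j * r) ^ finrank ℝ E) *
        ENNReal.ofReal |f y| ∂μ :=
      setLIntegral_mono' (measurableSet_ball.diff measurableSet_ball) fun y hy =>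
        enorm_kernel_mul_le_of_mem_annulus hA hK hr hx j hy.2
    _ = ENNReal.ofReal (A / (2 ^ j * r) ^ finrank ℝ E) * ∫⁻ y in S j, ENNReal.ofReal |f y| ∂μ :=
      lintegral_const_mul' _ _ ENNReal.ofReal_ne_top
    _ ≤ _ := by gcongr; exact Set.sdiff_subset
  calc ∫⁻ y, g y ∂μ = ∫⁻ y in (ball x₀ (2 * r))ᶜ, g y ∂μ :=
        (setLIntegral_eq_of_support_subset hsupp).symm
    _ ≤ ∫⁻ y in ⋃ j, S j, g y ∂μ := lintegral_mono_set (compl_ball_subset_iUnion_annuli x₀ hr)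
    _ ≤ ∑' j, ∫⁻ y in S j, g y ∂μ := lintegral_iUnion_le _ _
    _ ≤ _ := by
      simp only [← ENNReal.tsum_mul_left, ← mul_assoc,
        ← ofReal_div_pow_eq_mul_inv_measure_ball μ A x₀ hr]
      exact ENNReal.tsum_le_tsum hannulus

end SizeCondition

lemma norm_dilation_le {E : Type*} [NormedAddCommGroup E] [NormedSpace ℝ E] {K : E → ℂ}
    {A R : ℝ} {d : ℕ} (hR : 0 < R) (hK : ∀ w ≠ 0, ‖K w‖ ≤ A / ‖w‖ ^ d) {w : E} (hw : w ≠ 0) :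
    ‖(R : ℂ) ^ d * K (R • w)‖ ≤ A / ‖w‖ ^ d := by
  have hRw := hK (R • w) (smul_ne_zero hR.ne' hw)
  rw [norm_smul, Real.norm_of_nonneg hR.le, mul_pow] at hRw
  rw [norm_mul, norm_pow, Complex.norm_real, Real.norm_of_nonneg hR.le]
  calc R ^ d * ‖K (R • w)‖ ≤ R ^ d * (A / (R ^ d * ‖w‖ ^ d)) := by gcongr
    _ = A / ‖w‖ ^ d := by field_simp

lemma ofReal_brMax_le {n : ℕ} {δ : ℝ} {f : Rn n → ℝ} {x : Rn n} {M : ℝ≥0∞}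
    (h : ∀ R > 0, ‖brOp δ R f x‖ₑ ≤ M) : ENNReal.ofReal (brMax δ f x) ≤ M := by
  rcases eq_or_ne M ⊤ with rfl | hM
  · exact le_top
  rw [ENNReal.ofReal_le_iff_le_toReal hM]
  refine Real.iSup_le (fun R => Real.iSup_le (fun hR => ?_) ENNReal.toReal_nonneg)
    ENNReal.toReal_nonneg
  rw [← ENNReal.ofReal_le_iff_le_toReal hM, ofReal_norm]
  exact h R hR

/-- Pointwise estimate for the maximal Bochner–Riesz operator `T^{(n-1)/2}_*` applied to a
function vanishing on `2B`, at points of `B`: it is dominated by the sum of the averages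
of `|f|` over the dilated balls `2^{j+1}B`, `j ≥ 1`. -/
theorem brMax_pointwise_estimate (n : ℕ) (hn : 2 ≤ n) :
    ∃ C : ℝ, 0 < C ∧ ∀ (x₀ : Rn n) (r : ℝ), 0 < r →
      ∀ f : Rn n → ℝ, LocallyIntegrable f volume →
        (∀ y ∈ ball x₀ (2 * r), f y = 0) →
        ∀ x ∈ ball x₀ r,
          ENNReal.ofReal (brMax ((n - 1 : ℝ) / 2) f x) ≤
            ENNReal.ofReal C * ∑' j : ℕ,
              (volume (ball x₀ (2 ^ (j + 2) * r)))⁻¹ *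
                ∫⁻ y in ball x₀ (2 ^ (j + 2) * r), ENNReal.ofReal |f y| := by
  obtain ⟨A, hA, hK⟩ := exists_norm_brKernel_le hn
  have : Nonempty (Fin n) := ⟨⟨0, by omega⟩⟩
  have hd : Module.finrank ℝ (Rn n) = n := finrank_euclideanSpace_fin
  have hv : 0 < (volume (ball (0 : Rn n) 1)).toReal :=
    ENNReal.toReal_pos (measure_ball_pos _ _ one_pos).ne' measure_ball_lt_top.ne
  refine ⟨A * 4 ^ n * (volume (ball (0 : Rn n) 1)).toReal, by positivity, ?_⟩
  intro x₀ r hr f _ hf x hx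
  refine ofReal_brMax_le fun R hR => ?_
  have hKR : ∀ w : Rn n, w ≠ 0 → ‖(R : ℂ) ^ n * brKernel n ((n - 1 : ℝ) / 2) (R • w)‖ ≤
      A / ‖w‖ ^ Module.finrank ℝ (Rn n) := fun w hw => by
    rw [hd]; exact norm_dilation_le hR hK hw
  have hbound := lintegral_enorm_kernel_mul_le_tsum_average volume hA.le hKR hr hf hx
  rw [hd] at hbound
  exact (enorm_integral_le_lintegral_enorm _).trans hbound
end
end
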